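/- arXiv:1203.5496 — 3 statements merged into one kernel-verified Lean document; each statement's English description precedes it below -/
import Mathlib

section
/- Let H be a Hilbert space, a a bounded operator on H with ‖a‖ = 1, let 0 < c ≤ 1, n ≥ 1, and let ζ be a nonzero vector satisfying c‖(aa*)^n‖·‖ζ‖ ≤ ‖(aa*)^n ζ‖. Then there exists j ∈ {0, 1, …, n−1} such that c^{1/n} · ‖(aa*)^j ζ‖ ≤ ‖(aa*)^{j+1} ζ‖; in particular, setting η = a*(aa*)^j ζ, one has c^{1/n}‖a‖‖η‖ ≤ ‖a η‖. -/
/- ℓ²(X, H) is modeled as `lp (fun _ : X => H) 2`; `delta x` is the standard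
basis vector δ_x of ℓ²(X) = ℓ²(X, ℂ); `projSet s` is the orthogonal projection
of ℓ²(X, H) onto the coordinates in the finite set `s` (for a ball `N(x,S)` this
is the projection `P_x` onto ℓ²(N(x,S))).  The matrix coefficient
a_{y,z} = ⟨a δ_z, δ_y⟩ (linear in the first variable, as in the paper) is
`⟪delta y, a (delta z)⟫_ℂ` in Mathlib's convention (conjugate-linear in the
first slot), and the mathematicians' inner product ⟨u, v⟩ is `⟪v, u⟫_ℂ`. -/

noncomputable section
open scoped InnerProductSpace ComplexOrder ENNReal

attribute [local instance] Classical.propDecidable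

abbrev l2 (X : Type*) (H : Type*) [NormedAddCommGroup H] [InnerProductSpace ℂ H] :
    Type _ := lp (fun _ : X => H) 2

variable {X : Type*} {H : Type*} [NormedAddCommGroup H] [InnerProductSpace ℂ H]

def delta (x : X) : l2 X ℂ := lp.single 2 x 1

def evalCLM (x : X) : l2 X H →L[ℂ] H :=
  LinearMap.mkContinuous
    { toFun := fun f => f x
      map_add' := fun f g => by simp [lp.coeFn_add]
      map_smul' := fun c f => by simp [lp.coeFn_smul] }
    1 (fun f => by rw [one_mul]; exact lp.norm_apply_le_norm (by norm_num) f x)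

def singleCLM (x : X) : H →L[ℂ] l2 X H :=
  LinearMap.mkContinuous
    { toFun := fun v => lp.single 2 x v
      map_add' := fun v w => by
        apply lp.ext
        funext j
        by_cases h : j = x
        · subst h; simp [lp.single_apply_self, lp.coeFn_add]
        · simp [lp.single_apply_ne 2 x _ h, lp.coeFn_add]
      map_smul' := fun c v => by simpa using lp.single_smul 2 x v c }
    1 (fun v => by
      have : ‖(lp.single 2 x v : l2 X H)‖ = ‖v‖ := by
        simpa using lp.norm_single (p := 2) (by norm_num) (fun _ : X => v) x
      simp [this])

def projSet (s : Finset X) : l2 X H →L[ℂ] l2 X H :=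
  ∑ y ∈ s, (singleCLM y) ∘L (evalCLM y)

/-! Since a a* is self-adjoint, ‖(a a*)ⁿ‖ = ‖a‖²ⁿ = 1, so the hypothesis gives
‖(a a*)ⁿ ζ‖ ≥ c ‖ζ‖. If every ratio ‖(a a*)ʲ⁺¹ ζ‖ / ‖(a a*)ʲ ζ‖ were below c^{1/n}, their
product would be below c. For the chosen j, ‖a* x‖ ≤ ‖x‖ turns the ratio bound into the bound
for η = a* (a a*)ʲ ζ, since a η = (a a*)ʲ⁺¹ ζ. -/

theorem IsSelfAdjoint.nnnorm_pow {A : Type*} [CStarAlgebra A] {a : A} (ha : IsSelfAdjoint a)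
    {n : ℕ} (hn : n ≠ 0) : ‖a ^ n‖₊ = ‖a‖₊ ^ n := by
  rcases subsingleton_or_nontrivial A with _ | _
  · simp [Subsingleton.elim a 0, hn]
  refine le_antisymm (nnnorm_pow_le' a (Nat.pos_of_ne_zero hn)) ?_
  have := (spectrum.spectralRadius_pow_le (𝕜 := ℂ) a n hn).trans
    (spectrum.spectralRadius_le_nnnorm (a ^ n))
  rwa [ha.spectralRadius_eq_nnnorm, ← ENNReal.coe_pow, ENNReal.coe_le_coe] at this

theorem norm_mul_star_self_pow {A : Type*} [CStarAlgebra A] (a : A) {n : ℕ} (hn : n ≠ 0) :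
    ‖(a * star a) ^ n‖ = ‖a‖ ^ (2 * n) := by
  rw [← coe_nnnorm, (IsSelfAdjoint.mul_star_self a).nnnorm_pow hn, NNReal.coe_pow, coe_nnnorm,
    CStarRing.norm_self_mul_star, ← sq, pow_mul]

theorem exists_mul_le_succ_of_pow_mul_le {u : ℕ → ℝ} {c : ℝ} (hc : 0 ≤ c) {n : ℕ} (hn : 0 < n)
    (h : c ^ n * u 0 ≤ u n) : ∃ k < n, c * u k ≤ u (k + 1) := by
  by_contra! hlt
  exact (lt_geom hc hn hlt).not_ge h

theorem stmt3_general {H : Type*} [NormedAddCommGroup H] [InnerProductSpace ℂ H] [CompleteSpace H]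
    (a : H →L[ℂ] H) (ha : ‖a‖ = 1) (c : ℝ) (hc0 : 0 < c)
    (n : ℕ) (hn : 1 ≤ n) (ζ : H)
    (hloc : c * ‖(a ∘L ContinuousLinearMap.adjoint a) ^ n‖ * ‖ζ‖ ≤
      ‖((a ∘L ContinuousLinearMap.adjoint a) ^ n) ζ‖) :
    ∃ j : ℕ, j < n ∧
      c ^ ((1 : ℝ) / n) * ‖((a ∘L ContinuousLinearMap.adjoint a) ^ j) ζ‖ ≤
        ‖((a ∘L ContinuousLinearMap.adjoint a) ^ (j + 1)) ζ‖ ∧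
      c ^ ((1 : ℝ) / n) * ‖a‖ *
          ‖(ContinuousLinearMap.adjoint a) (((a ∘L ContinuousLinearMap.adjoint a) ^ j) ζ)‖ ≤
        ‖a ((ContinuousLinearMap.adjoint a) (((a ∘L ContinuousLinearMap.adjoint a) ^ j) ζ))‖ := by
  set T := a ∘L ContinuousLinearMap.adjoint a
  set s := c ^ ((1 : ℝ) / n)
  have hn0 : n ≠ 0 := Nat.one_le_iff_ne_zero.mp hn
  have hs : 0 ≤ s := Real.rpow_nonneg hc0.le _
  have hsn : s ^ n = c := by
    simpa only [s, one_div] using Real.rpow_inv_natCast_pow hc0.le hn0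
  have hTn : ‖T ^ n‖ = 1 := by
    rw [show ‖T ^ n‖ = ‖a‖ ^ (2 * n) from norm_mul_star_self_pow a hn0, ha, one_pow]
  obtain ⟨j, hj, hstep⟩ := exists_mul_le_succ_of_pow_mul_le (u := fun k => ‖(T ^ k) ζ‖) hs
    (Nat.pos_of_ne_zero hn0) (by simpa [hsn, hTn] using hloc)
  refine ⟨j, hj, hstep, ?_⟩
  have hT : (T ^ (j + 1)) ζ = a (ContinuousLinearMap.adjoint a ((T ^ j) ζ)) := by
    rw [pow_succ']; rfl
  calc s * ‖a‖ * ‖ContinuousLinearMap.adjoint a ((T ^ j) ζ)‖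
      ≤ s * ‖(T ^ j) ζ‖ := by
        rw [ha, mul_one]
        gcongr
        simpa [ha] using (ContinuousLinearMap.adjoint a).le_opNorm ((T ^ j) ζ)
    _ ≤ ‖a (ContinuousLinearMap.adjoint a ((T ^ j) ζ))‖ := hT ▸ hstep

/-- if ‖a‖ = 1 and c‖(aa*)ⁿ‖‖ζ‖ ≤ ‖(aa*)ⁿζ‖, then some telescoping
factor is at least c^{1/n}, and η = a*(aa*)ʲζ satisfies c^{1/n}‖a‖‖η‖ ≤ ‖aη‖. -/
theorem stmt3 {H : Type*} [NormedAddCommGroup H] [InnerProductSpace ℂ H] [CompleteSpace H]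
    (a : H →L[ℂ] H) (ha : ‖a‖ = 1) (c : ℝ) (hc0 : 0 < c) (hc1 : c ≤ 1)
    (n : ℕ) (hn : 1 ≤ n) (ζ : H) (hζ : ζ ≠ 0)
    (hloc : c * ‖(a ∘L ContinuousLinearMap.adjoint a) ^ n‖ * ‖ζ‖ ≤
      ‖((a ∘L ContinuousLinearMap.adjoint a) ^ n) ζ‖) :
    ∃ j : ℕ, j < n ∧
      c ^ ((1 : ℝ) / n) * ‖((a ∘L ContinuousLinearMap.adjoint a) ^ j) ζ‖ ≤
        ‖((a ∘L ContinuousLinearMap.adjoint a) ^ (j + 1)) ζ‖ ∧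
      c ^ ((1 : ℝ) / n) * ‖a‖ *
          ‖(ContinuousLinearMap.adjoint a) (((a ∘L ContinuousLinearMap.adjoint a) ^ j) ζ)‖ ≤
        ‖a ((ContinuousLinearMap.adjoint a) (((a ∘L ContinuousLinearMap.adjoint a) ^ j) ζ))‖ :=
  stmt3_general a ha c hc0 n hn ζ hloc
end
end

section
/- Let X be a discrete metric space with bounded geometry. Suppose that for every ε > 0 and R > 0 there exist S > 0 and unit vectors {ξ_x}_{x∈X} ⊆ ℓ²(X) with supp(ξ_x) ⊆ N(x,S) and ‖ξ_y − ξ_z‖ < ε whenever d(y,z) ≤ R (i.e., X has property A in the form of Proposition 3.2(2) of Tu). Then X satisfies: for every ε' > 0 and R > 0 there exists S' > R such that (1 − ε')‖a‖ ≤ sup_{x∈X} ‖[a_{y,z}]_{y,z∈N(x,S')}‖ for every bounded operator a on ℓ²(X) of propagation at most R. -/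
/-! Write the matrix of `a` as `[⟨ξ_y, ξ_z⟩ a_{y,z}] + [(1 - ⟨ξ_y, ξ_z⟩) a_{y,z}]`. Expanding
`⟨ξ_y, ξ_z⟩ = ∑_w ξ_y(w) conj ξ_z(w)`, the first matrix is a sum over `w` of compressions of `a`
to the balls `N(w, S')`, tested on the vectors `z ↦ u_z ξ_z(w)` whose squared norms add up to at
most `‖u‖²`; hence its norm is at most `sup_x ‖P_x a P_x‖`. The second matrix has propagation
`≤ R` and entries of size `≤ ε ‖a‖`, so by bounded geometry its norm is at most `C ε ‖a‖`, where
`C` bounds the cardinality of `R`-balls. All estimates are made on finitely supported vectors,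
which are dense in `ℓ²(X)`. -/

/- ℓ²(X, H) is modeled as `lp (fun _ : X => H) 2`; `delta x` is the standard
basis vector δ_x of ℓ²(X) = ℓ²(X, ℂ); `projSet s` is the orthogonal projection
of ℓ²(X, H) onto the coordinates in the finite set `s` (for a ball `N(x,S)` this
is the projection `P_x` onto ℓ²(N(x,S))).  The matrix coefficient
a_{y,z} = ⟨a δ_z, δ_y⟩ (linear in the first variable, as in the paper) is
`⟪delta y, a (delta z)⟫_ℂ` in Mathlib's convention (conjugate-linear in the
first slot), and the mathematicians' inner product ⟨u, v⟩ is `⟪v, u⟫_ℂ`. -/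

noncomputable section
open scoped InnerProductSpace ComplexOrder ENNReal

attribute [local instance] Classical.propDecidable

variable {X : Type*} {H : Type*} [NormedAddCommGroup H] [InnerProductSpace ℂ H]

open Finset Filter Topology Metric

lemma Finset.sum_mul_le_of_sum_sq_le {ι : Type*} (t : Finset ι) {f g : ι → ℝ} {A B : ℝ}
    (hA : 0 ≤ A) (hB : 0 ≤ B) (hf : ∑ i ∈ t, f i ^ 2 ≤ A ^ 2) (hg : ∑ i ∈ t, g i ^ 2 ≤ B ^ 2) :
    ∑ i ∈ t, f i * g i ≤ A * B := by
  refine (Real.sum_mul_le_sqrt_mul_sqrt t f g).trans (mul_le_mul ?_ ?_ (Real.sqrt_nonneg _) hA)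
  · exact (Real.sqrt_le_sqrt hf).trans_eq (Real.sqrt_sq hA)
  · exact (Real.sqrt_le_sqrt hg).trans_eq (Real.sqrt_sq hB)

lemma norm_one_sub_inner_le {𝕜 E : Type*} [RCLike 𝕜] [NormedAddCommGroup E]
    [InnerProductSpace 𝕜 E] {ξ : E} (hξ : ‖ξ‖ = 1) (η : E) : ‖1 - ⟪ξ, η⟫_𝕜‖ ≤ ‖ξ - η‖ := by
  have h1 : (1 : 𝕜) - ⟪ξ, η⟫_𝕜 = ⟪ξ, ξ - η⟫_𝕜 := by
    rw [inner_sub_right, inner_self_eq_norm_sq_to_K, hξ, RCLike.ofReal_one, one_pow]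
  rw [h1]
  exact (norm_inner_le_norm _ _).trans_eq (by rw [hξ, one_mul])

section FinitelySupported

variable {X : Type*}

def finsetVec (s : Finset X) (c : X → ℂ) : l2 X ℂ := ∑ z ∈ s, lp.single 2 z (c z)

lemma finsetVec_apply (s : Finset X) (c : X → ℂ) (j : X) :
    finsetVec s c j = if j ∈ s then c j else 0 := by
  simp only [finsetVec, lp.coeFn_sum, Finset.sum_apply, lp.single_apply, Pi.single_apply,
    Finset.sum_ite_eq]

lemma inner_finsetVec_left (s : Finset X) (d : X → ℂ) (f : l2 X ℂ) :
    ⟪finsetVec s d, f⟫_ℂ = ∑ y ∈ s, (starRingEnd ℂ) (d y) * f y := by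
  simp only [finsetVec, sum_inner, lp.inner_single_left, RCLike.inner_apply, mul_comm]

lemma inner_delta_left (y : X) (f : l2 X ℂ) : ⟪delta y, f⟫_ℂ = f y := by
  simp [delta, lp.inner_single_left, RCLike.inner_apply]

lemma norm_finsetVec_sq (s : Finset X) (c : X → ℂ) :
    ‖finsetVec s c‖ ^ 2 = ∑ z ∈ s, ‖c z‖ ^ 2 := by
  rw [← inner_self_eq_norm_sq (𝕜 := ℂ), inner_finsetVec_left, map_sum]
  refine Finset.sum_congr rfl fun z hz => ?_
  rw [finsetVec_apply, if_pos hz, RCLike.conj_mul]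
  norm_cast

lemma sum_norm_sq_le_norm_sq (s : Finset X) (f : l2 X ℂ) :
    ∑ z ∈ s, ‖f z‖ ^ 2 ≤ ‖f‖ ^ 2 := by
  have h := lp.sum_rpow_le_norm_rpow (p := 2) (by norm_num) f s
  simp only [ENNReal.toReal_ofNat, Real.rpow_two] at h
  exact h

lemma projSet_apply (s : Finset X) (f : l2 X ℂ) : projSet s f = finsetVec s f := by
  simp only [projSet, finsetVec, _root_.sum_apply, ContinuousLinearMap.comp_apply]
  rfl

lemma norm_projSet_apply_le (s : Finset X) (f : l2 X ℂ) : ‖projSet s f‖ ≤ ‖f‖ := by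
  refine le_of_sq_le_sq ?_ (norm_nonneg f)
  rw [projSet_apply, norm_finsetVec_sq]
  exact sum_norm_sq_le_norm_sq s f

lemma norm_compression_le (s : Finset X) (a : l2 X ℂ →L[ℂ] l2 X ℂ) :
    ‖projSet s ∘L a ∘L projSet s‖ ≤ ‖a‖ := by
  have hP : ‖(projSet s : l2 X ℂ →L[ℂ] l2 X ℂ)‖ ≤ 1 :=
    ContinuousLinearMap.opNorm_le_bound _ zero_le_one fun f => by
      rw [one_mul]; exact norm_projSet_apply_le s f
  refine (ContinuousLinearMap.opNorm_comp_le _ _).trans ?_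
  refine (mul_le_mul hP (ContinuousLinearMap.opNorm_comp_le _ _) (norm_nonneg _)
    zero_le_one).trans ?_
  rw [one_mul]
  exact mul_le_of_le_one_right (norm_nonneg a) hP

lemma inner_projSet_left (s : Finset X) (u v : l2 X ℂ) :
    ⟪projSet s u, v⟫_ℂ = ⟪u, projSet s v⟫_ℂ := by
  rw [projSet_apply, projSet_apply, inner_finsetVec_left, ← inner_conj_symm, inner_finsetVec_left,
    map_sum]
  refine Finset.sum_congr rfl fun _ _ => ?_
  rw [map_mul, RCLike.conj_conj, mul_comm]

lemma tendsto_projSet (f : l2 X ℂ) : Tendsto (fun s : Finset X => projSet s f) atTop (𝓝 f) := by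
  simp only [projSet_apply]
  exact lp.hasSum_single ENNReal.ofNat_ne_top f

lemma norm_inner_le_of_finsetVec {a : l2 X ℂ →L[ℂ] l2 X ℂ} {K : ℝ}
    (h : ∀ s c d, ‖⟪finsetVec s d, a (finsetVec s c)⟫_ℂ‖ ≤ K * ‖finsetVec s c‖ * ‖finsetVec s d‖)
    (f g : l2 X ℂ) : ‖⟪g, a f⟫_ℂ‖ ≤ K * ‖f‖ * ‖g‖ := by
  refine le_of_tendsto_of_tendsto'
    ((tendsto_projSet g).inner ((a.continuous.tendsto f).comp (tendsto_projSet f))).norm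
    (((tendsto_projSet f).norm.const_mul K).mul (tendsto_projSet g).norm) fun s => ?_
  simpa only [Function.comp_apply, projSet_apply] using h s f g

lemma opNorm_le_of_finsetVec {a : l2 X ℂ →L[ℂ] l2 X ℂ} {K : ℝ} (hK : 0 ≤ K)
    (h : ∀ s c d, ‖⟪finsetVec s d, a (finsetVec s c)⟫_ℂ‖ ≤ K * ‖finsetVec s c‖ * ‖finsetVec s d‖) :
    ‖a‖ ≤ K :=
  ContinuousLinearMap.opNorm_le_of_re_inner_le hK fun f g hf hg => by
    calc RCLike.re ⟪a f, g⟫_ℂ ≤ ‖⟪g, a f⟫_ℂ‖ := by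
          rw [← inner_conj_symm, RCLike.conj_re]; exact RCLike.re_le_norm _
      _ ≤ K * ‖f‖ * ‖g‖ := norm_inner_le_of_finsetVec h f g
      _ = K := by rw [hf, hg, mul_one, mul_one]

lemma norm_inner_le_norm_compression (a : l2 X ℂ →L[ℂ] l2 X ℂ) (t : Finset X) {u v : l2 X ℂ}
    (hu : projSet t u = u) (hv : projSet t v = v) :
    ‖⟪v, a u⟫_ℂ‖ ≤ ‖projSet t ∘L a ∘L projSet t‖ * ‖u‖ * ‖v‖ := by
  have hcompress : ⟪v, a u⟫_ℂ = ⟪v, (projSet t ∘L a ∘L projSet t) u⟫_ℂ := by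
    rw [ContinuousLinearMap.comp_apply, ContinuousLinearMap.comp_apply, ← inner_projSet_left,
      hu, hv]
  calc ‖⟪v, a u⟫_ℂ‖ ≤ ‖v‖ * (‖projSet t ∘L a ∘L projSet t‖ * ‖u‖) := by
        rw [hcompress]
        exact (norm_inner_le_norm _ _).trans (by gcongr; exact ContinuousLinearMap.le_opNorm _ _)
    _ = ‖projSet t ∘L a ∘L projSet t‖ * ‖u‖ * ‖v‖ := by ring

lemma norm_inner_delta_le (a : l2 X ℂ →L[ℂ] l2 X ℂ) (y z : X) :
    ‖⟪delta y, a (delta z)⟫_ℂ‖ ≤ ‖a‖ := by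
  have hδ : ∀ x : X, ‖delta x‖ = 1 := fun x => by simp [delta, lp.norm_single]
  calc ‖⟪delta y, a (delta z)⟫_ℂ‖ ≤ ‖delta y‖ * (‖a‖ * ‖delta z‖) :=
        (norm_inner_le_norm _ _).trans (by gcongr; exact a.le_opNorm _)
    _ = ‖a‖ := by rw [hδ, hδ, one_mul, mul_one]

def finsetForm (s : Finset X) (m : X → X → ℂ) (c d : X → ℂ) : ℂ :=
  ∑ y ∈ s, ∑ z ∈ s, (starRingEnd ℂ) (d y) * m y z * c z

lemma inner_finsetVec_eq_finsetForm (a : l2 X ℂ →L[ℂ] l2 X ℂ) (s : Finset X) (c d : X → ℂ) :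
    ⟪finsetVec s d, a (finsetVec s c)⟫_ℂ =
      finsetForm s (fun y z => ⟪delta y, a (delta z)⟫_ℂ) c d := by
  have hsingle : ∀ z, (lp.single 2 z (c z) : l2 X ℂ) = c z • delta z := fun z => by
    rw [delta, ← lp.single_smul, smul_eq_mul, mul_one]
  rw [inner_finsetVec_left]
  refine Finset.sum_congr rfl fun y _ => ?_
  simp only [finsetVec, hsingle, map_sum, map_smul, lp.coeFn_sum, Finset.sum_apply, lp.coeFn_smul,
    Pi.smul_apply, smul_eq_mul, Finset.mul_sum, inner_delta_left]
  exact Finset.sum_congr rfl fun z _ => by ring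

lemma finsetForm_add (s : Finset X) (m₁ m₂ : X → X → ℂ) (c d : X → ℂ) :
    finsetForm s (fun y z => m₁ y z + m₂ y z) c d = finsetForm s m₁ c d + finsetForm s m₂ c d := by
  simp only [finsetForm, ← Finset.sum_add_distrib, mul_add, add_mul]

end FinitelySupported

section Banded

variable {X : Type*} [PseudoMetricSpace X]

lemma card_filter_dist_le {x : X} {R : ℝ} {C : ℕ} (hfin : (closedBall x R).Finite)
    (hC : (closedBall x R).ncard ≤ C) (s : Finset X) : #{y ∈ s | dist y x ≤ R} ≤ C := by
  rw [← Set.ncard_coe_finset]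
  refine (Set.ncard_le_ncard (fun y hy => ?_) hfin).trans hC
  exact mem_closedBall.2 (Finset.mem_filter.1 hy).2

lemma sum_sum_ite_dist_le {s : Finset X} {R : ℝ} {C : ℕ} (hC : ∀ x, #{y ∈ s | dist y x ≤ R} ≤ C)
    {e : X → ℝ} (he : ∀ x, 0 ≤ e x) :
    ∑ x ∈ s, ∑ y ∈ s, (if dist y x ≤ R then e x else 0) ≤ C * ∑ x ∈ s, e x := by
  rw [Finset.mul_sum]
  refine Finset.sum_le_sum fun x _ => ?_
  rw [← Finset.sum_filter, Finset.sum_const, nsmul_eq_mul]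
  gcongr
  · exact he x
  · exact_mod_cast hC x

lemma norm_finsetForm_le_of_banded {s : Finset X} {m : X → X → ℂ} {R B : ℝ} {C : ℕ}
    (hB0 : 0 ≤ B) (hB : ∀ y z, dist y z ≤ R → ‖m y z‖ ≤ B)
    (hm : ∀ y z, R < dist y z → m y z = 0) (hC : ∀ x, #{y ∈ s | dist y x ≤ R} ≤ C)
    (c d : X → ℂ) :
    ‖finsetForm s m c d‖ ≤ C * B * ‖finsetVec s c‖ * ‖finsetVec s d‖ := by
  set f : X × X → ℝ := fun p => if dist p.1 p.2 ≤ R then ‖d p.1‖ else 0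
  set g : X × X → ℝ := fun p => if dist p.1 p.2 ≤ R then ‖c p.2‖ else 0
  have hterm : ∀ y z, ‖(starRingEnd ℂ) (d y) * m y z * c z‖ ≤ B * (f (y, z) * g (y, z)) := by
    intro y z
    by_cases hyz : dist y z ≤ R
    · simp only [f, g, if_pos hyz, norm_mul, RCLike.norm_conj]
      calc ‖d y‖ * ‖m y z‖ * ‖c z‖ ≤ ‖d y‖ * B * ‖c z‖ := by gcongr; exact hB y z hyz
        _ = B * (‖d y‖ * ‖c z‖) := by ring
    · simp [f, g, if_neg hyz, hm y z (not_le.1 hyz)]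
  have hsqrtC : ∀ x : ℝ, (√(C : ℝ) * x) ^ 2 = C * x ^ 2 := fun x => by
    rw [mul_pow, Real.sq_sqrt (Nat.cast_nonneg _)]
  have hf : ∑ p ∈ s ×ˢ s, f p ^ 2 ≤ (√(C : ℝ) * ‖finsetVec s d‖) ^ 2 := by
    rw [hsqrtC, norm_finsetVec_sq, Finset.sum_product]
    simpa only [f, ite_pow, dist_comm, ne_eq, OfNat.ofNat_ne_zero, not_false_eq_true, zero_pow]
      using sum_sum_ite_dist_le hC (e := fun y => ‖d y‖ ^ 2) fun _ => sq_nonneg _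
  have hg : ∑ p ∈ s ×ˢ s, g p ^ 2 ≤ (√(C : ℝ) * ‖finsetVec s c‖) ^ 2 := by
    rw [hsqrtC, norm_finsetVec_sq, Finset.sum_product, Finset.sum_comm]
    simpa only [g, ite_pow, ne_eq, OfNat.ofNat_ne_zero, not_false_eq_true, zero_pow]
      using sum_sum_ite_dist_le hC (e := fun z => ‖c z‖ ^ 2) fun _ => sq_nonneg _
  calc ‖finsetForm s m c d‖ ≤ ∑ y ∈ s, ∑ z ∈ s, B * (f (y, z) * g (y, z)) :=
        (norm_sum_le _ _).trans <| Finset.sum_le_sum fun y _ =>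
          (norm_sum_le _ _).trans <| Finset.sum_le_sum fun z _ => hterm y z
    _ = B * ∑ p ∈ s ×ˢ s, f p * g p := by simp only [Finset.sum_product, Finset.mul_sum]
    _ ≤ B * ((√(C : ℝ) * ‖finsetVec s d‖) * (√(C : ℝ) * ‖finsetVec s c‖)) := by
        gcongr
        exact Finset.sum_mul_le_of_sum_sq_le _ (by positivity) (by positivity) hf hg
    _ = C * B * ‖finsetVec s c‖ * ‖finsetVec s d‖ := by
        rw [mul_mul_mul_comm, Real.mul_self_sqrt (Nat.cast_nonneg _)]; ring

end Banded

section SchurMultiplier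

variable {X : Type*}

lemma finsetVec_eq_self {F : Finset X} {g : l2 X ℂ} (hg : ∀ w ∉ F, g w = 0) :
    finsetVec F g = g := by
  refine lp.ext (funext fun j => ?_)
  rw [finsetVec_apply]
  split_ifs with hj
  · rfl
  · exact (hg j hj).symm

lemma inner_eq_sum_of_support {F : Finset X} {g : l2 X ℂ} (hg : ∀ w ∉ F, g w = 0) (f : l2 X ℂ) :
    ⟪f, g⟫_ℂ = ∑ w ∈ F, (starRingEnd ℂ) (f w) * g w := by
  rw [← inner_conj_symm, ← finsetVec_eq_self hg, inner_finsetVec_left, map_sum]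
  refine Finset.sum_congr rfl fun w hw => ?_
  rw [finsetVec_apply, if_pos hw, map_mul, RCLike.conj_conj, mul_comm]

lemma sum_norm_finsetVec_mul_sq_le (s F : Finset X) (c : X → ℂ) {ξ : X → l2 X ℂ}
    (hξ : ∀ z, ‖ξ z‖ ≤ 1) :
    ∑ w ∈ F, ‖finsetVec s (fun z => c z * ξ z w)‖ ^ 2 ≤ ‖finsetVec s c‖ ^ 2 := by
  simp only [norm_finsetVec_sq, norm_mul, mul_pow]
  rw [Finset.sum_comm]
  refine Finset.sum_le_sum fun z _ => ?_
  rw [← Finset.mul_sum]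
  have hξz : ∑ w ∈ F, ‖ξ z w‖ ^ 2 ≤ 1 :=
    (sum_norm_sq_le_norm_sq F (ξ z)).trans (pow_le_one₀ (norm_nonneg _) (hξ z))
  calc ‖c z‖ ^ 2 * ∑ w ∈ F, ‖ξ z w‖ ^ 2 ≤ ‖c z‖ ^ 2 * 1 := by gcongr
    _ = ‖c z‖ ^ 2 := mul_one _

/- Since `⟪ξ y, ξ z⟫ = ∑ w, conj (ξ y w) * ξ z w`, the Schur multiplier by `⟪ξ y, ξ z⟫` is a sum
over `w` of compressions of `a` to `t w`, tested on the vectors `z ↦ c z * ξ z w`. -/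
lemma norm_finsetForm_schur_le (a : l2 X ℂ →L[ℂ] l2 X ℂ) {s F : Finset X} {t : X → Finset X}
    {ξ : X → l2 X ℂ} {M : ℝ} (hM0 : 0 ≤ M) (hξ : ∀ z, ‖ξ z‖ ≤ 1)
    (hF : ∀ z ∈ s, ∀ w ∉ F, ξ z w = 0) (ht : ∀ z w, ξ z w ≠ 0 → z ∈ t w)
    (hM : ∀ w, ‖projSet (t w) ∘L a ∘L projSet (t w)‖ ≤ M) (c d : X → ℂ) :
    ‖finsetForm s (fun y z => ⟪ξ y, ξ z⟫_ℂ * ⟪delta y, a (delta z)⟫_ℂ) c d‖ ≤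
      M * ‖finsetVec s c‖ * ‖finsetVec s d‖ := by
  set u : X → l2 X ℂ := fun w => finsetVec s (fun z => c z * ξ z w)
  set v : X → l2 X ℂ := fun w => finsetVec s (fun y => d y * ξ y w)
  have hsum : finsetForm s (fun y z => ⟪ξ y, ξ z⟫_ℂ * ⟪delta y, a (delta z)⟫_ℂ) c d =
      ∑ w ∈ F, ⟪v w, a (u w)⟫_ℂ := by
    simp only [u, v, inner_finsetVec_eq_finsetForm, finsetForm]
    symm
    rw [Finset.sum_comm]
    refine Finset.sum_congr rfl fun y _ => ?_
    rw [Finset.sum_comm]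
    refine Finset.sum_congr rfl fun z hz => ?_
    rw [inner_eq_sum_of_support (hF z hz), Finset.sum_mul, Finset.mul_sum, Finset.sum_mul]
    refine Finset.sum_congr rfl fun w _ => ?_
    rw [map_mul]
    ring
  have hfixed : ∀ (e : X → ℂ) w, projSet (t w) (finsetVec s (fun z => e z * ξ z w)) =
      finsetVec s (fun z => e z * ξ z w) := by
    intro e w
    rw [projSet_apply, finsetVec_eq_self fun j hj => ?_]
    rw [finsetVec_apply]
    split_ifs
    · rw [not_imp_comm.1 (ht j w) hj, mul_zero]
    · rfl
  calc ‖finsetForm s (fun y z => ⟪ξ y, ξ z⟫_ℂ * ⟪delta y, a (delta z)⟫_ℂ) c d‖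
      ≤ ∑ w ∈ F, M * (‖u w‖ * ‖v w‖) := by
        rw [hsum]
        refine (norm_sum_le _ _).trans (Finset.sum_le_sum fun w _ => ?_)
        refine (norm_inner_le_norm_compression a (t w) (hfixed c w) (hfixed d w)).trans ?_
        rw [mul_assoc]
        gcongr
        exact hM w
    _ ≤ M * (‖finsetVec s c‖ * ‖finsetVec s d‖) := by
        rw [← Finset.mul_sum]
        gcongr
        exact Finset.sum_mul_le_of_sum_sq_le _ (norm_nonneg _) (norm_nonneg _)
          (sum_norm_finsetVec_mul_sq_le s F c hξ) (sum_norm_finsetVec_mul_sq_le s F d hξ)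
    _ = M * ‖finsetVec s c‖ * ‖finsetVec s d‖ := (mul_assoc _ _ _).symm

end SchurMultiplier

lemma opNorm_le_add_of_norm_compression_le {X : Type*} [MetricSpace X]
    (hfin : ∀ (x : X) (r : ℝ), (closedBall x r).Finite) {R S S' ε M : ℝ} {C : ℕ}
    {ξ : X → l2 X ℂ} {a : l2 X ℂ →L[ℂ] l2 X ℂ} (hC : ∀ x : X, (closedBall x R).ncard ≤ C)
    (hξ1 : ∀ x, ‖ξ x‖ = 1) (hξS : ∀ x y, ξ x y ≠ 0 → y ∈ closedBall x S)
    (hξR : ∀ y z, dist y z ≤ R → ‖ξ y - ξ z‖ < ε) (hε : 0 ≤ ε) (hSS' : S ≤ S')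
    (ha : ∀ y z, R < dist y z → ⟪delta y, a (delta z)⟫_ℂ = 0) (hM0 : 0 ≤ M)
    (hM : ∀ x, ‖projSet (hfin x S').toFinset ∘L a ∘L projSet (hfin x S').toFinset‖ ≤ M) :
    ‖a‖ ≤ M + C * (ε * ‖a‖) := by
  refine opNorm_le_of_finsetVec (by positivity) fun s c d => ?_
  have hsplit := finsetForm_add s (fun y z => ⟪ξ y, ξ z⟫_ℂ * ⟪delta y, a (delta z)⟫_ℂ)
    (fun y z => (1 - ⟪ξ y, ξ z⟫_ℂ) * ⟪delta y, a (delta z)⟫_ℂ) c d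
  simp only [← add_mul, add_sub_cancel, one_mul] at hsplit
  rw [inner_finsetVec_eq_finsetForm, hsplit, add_mul, add_mul]
  refine (norm_add_le _ _).trans (add_le_add ?_ ?_)
  · refine norm_finsetForm_schur_le a (F := s.biUnion fun z => (hfin z S).toFinset) hM0
      (fun z => (hξ1 z).le) (fun z hz w hw => ?_) (fun z w hzw => ?_) hM c d
    · by_contra h
      exact hw (Finset.mem_biUnion.2 ⟨z, hz, (hfin z S).mem_toFinset.2 (hξS z w h)⟩)
    · rw [Set.Finite.mem_toFinset, mem_closedBall, dist_comm]
      exact (mem_closedBall.1 (hξS z w hzw)).trans hSS'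
  · refine norm_finsetForm_le_of_banded (by positivity) (fun y z hyz => ?_)
      (fun y z hyz => by rw [ha y z hyz, mul_zero])
      (fun x => card_filter_dist_le (hfin x R) (hC x) s) c d
    rw [norm_mul]
    exact mul_le_mul ((norm_one_sub_inner_le (hξ1 y) _).trans (hξR y z hyz).le)
      (norm_inner_delta_le a y z) (norm_nonneg _) hε

/-- property A (in the form of Tu's Proposition 3.2(2): unit vectors
ξ_x supported in N(x,S) with ‖ξ_y − ξ_z‖ < ε for d(y,z) ≤ R) implies the operator
norm localization estimate (1 − ε')‖a‖ ≤ sup_x ‖P_x a P_x‖ (compression to balls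
of radius S') for operators of propagation ≤ R. -/
theorem stmt9 {X : Type*} [MetricSpace X]
    (hfin : ∀ (x : X) (r : ℝ), (Metric.closedBall x r).Finite)
    (hbg : ∀ r : ℝ, ∃ C : ℕ, ∀ x : X, (Metric.closedBall x r).ncard ≤ C)
    (hA : ∀ ε > (0 : ℝ), ∀ R > (0 : ℝ), ∃ S > (0 : ℝ), ∃ ξ : X → l2 X ℂ,
      (∀ x : X, ‖ξ x‖ = 1) ∧
      (∀ x y : X, (ξ x : ∀ _ : X, ℂ) y ≠ 0 → y ∈ Metric.closedBall x S) ∧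
      (∀ y z : X, dist y z ≤ R → ‖ξ y - ξ z‖ < ε)) :
    ∀ ε' > (0 : ℝ), ∀ R > (0 : ℝ), ∃ S' > R,
      ∀ a : l2 X ℂ →L[ℂ] l2 X ℂ,
        (∀ y z : X, R < dist y z → ⟪delta y, a (delta z)⟫_ℂ = 0) →
        (1 - ε') * ‖a‖ ≤
          ⨆ x : X, ‖projSet (hfin x S').toFinset ∘L a ∘L projSet (hfin x S').toFinset‖ := by
  intro ε' hε' R hR
  obtain ⟨C, hC⟩ := hbg R
  have hεC : C * (ε' / (C + 1)) ≤ ε' := by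
    rw [mul_div_assoc', div_le_iff₀ (by positivity)]
    nlinarith
  obtain ⟨S, hS, ξ, hξ1, hξS, hξR⟩ := hA (ε' / (C + 1)) (by positivity) R hR
  refine ⟨R + S, by linarith, fun a ha => ?_⟩
  have hnorm := opNorm_le_add_of_norm_compression_le hfin hC hξ1 hξS hξR (by positivity)
    (by linarith : S ≤ R + S) ha (Real.iSup_nonneg fun _ => norm_nonneg _)
    (le_ciSup ⟨‖a‖, Set.forall_mem_range.2 fun x => norm_compression_le _ a⟩)
  nlinarith [mul_le_mul_of_nonneg_right hεC (norm_nonneg a)]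
end
end

section
/- Let X be a discrete metric space with bounded geometry and 0 < R < S. The completely bounded norm of the inverse compression map (ψ_S|_{E_R})^{-1} : ψ_S(E_R) → E_R equals its operator norm: ‖(ψ_S|_{E_R})^{-1}‖_cb = ‖(ψ_S|_{E_R})^{-1}‖. -/
/- ℓ²(X, H) is modeled as `lp (fun _ : X => H) 2`; `delta x` is the standard
basis vector δ_x of ℓ²(X) = ℓ²(X, ℂ); `projSet s` is the orthogonal projection
of ℓ²(X, H) onto the coordinates in the finite set `s` (for a ball `N(x,S)` this
is the projection `P_x` onto ℓ²(N(x,S))).  The matrix coefficient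
a_{y,z} = ⟨a δ_z, δ_y⟩ (linear in the first variable, as in the paper) is
`⟪delta y, a (delta z)⟫_ℂ` in Mathlib's convention (conjugate-linear in the
first slot), and the mathematicians' inner product ⟨u, v⟩ is `⟪v, u⟫_ℂ`. -/

noncomputable section
open scoped InnerProductSpace ComplexOrder ENNReal

attribute [local instance] Classical.propDecidable

variable {X : Type*} {H : Type*} [NormedAddCommGroup H] [InnerProductSpace ℂ H]

variable (X : Type*) [MetricSpace X]

/-- `a` has propagation at most `R`: its B(H)-valued matrix coefficients vanish at
distance > R. -/
def PropagationLE {H : Type*} [NormedAddCommGroup H] [InnerProductSpace ℂ H]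
    (R : ℝ) (a : l2 X H →L[ℂ] l2 X H) : Prop :=
  ∀ y z : X, R < dist y z → ∀ v : H, (a (lp.single 2 z v) : ∀ _ : X, H) y = 0

/-- the norm of ψ_S(a) = (P_x a P_x)_x in the ℓ^∞-product ∏_x B(ℓ²(N(x,S), H)). -/
def psiNorm {H : Type*} [NormedAddCommGroup H] [InnerProductSpace ℂ H]
    (hfin : ∀ (x : X) (r : ℝ), (Metric.closedBall x r).Finite) (S : ℝ)
    (a : l2 X H →L[ℂ] l2 X H) : ℝ :=
  ⨆ x : X, ‖projSet (hfin x S).toFinset ∘L a ∘L projSet (hfin x S).toFinset‖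

/-- the norm of the map (ψ_S|_{E_R})⁻¹ : ψ_S(E_R) → E_R, amplified by the Hilbert
space H (H = ℂ gives the operator norm, H = ℂⁿ the n-th amplification):
sup { ‖a‖ : a of propagation ≤ R, ‖ψ_S(a)‖ ≤ 1 }. -/
def invNorm (H : Type*) [NormedAddCommGroup H] [InnerProductSpace ℂ H]
    (hfin : ∀ (x : X) (r : ℝ), (Metric.closedBall x r).Finite) (R S : ℝ) : ℝ :=
  sSup { t : ℝ | ∃ a : l2 X H →L[ℂ] l2 X H,
    PropagationLE X R a ∧ psiNorm X hfin S a ≤ 1 ∧ t = ‖a‖ }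

/-! A scalar operator `a` is recovered from the `H`-valued operator `V a V*`, where `V f = f ⊗ e`
for a unit vector `e ∈ H`. Conversely, if an `H`-valued operator `a` moves a vector `ξ` of norm `< 1` to `a ξ` of
norm `> t`, let `V, W` be the diagonal isometries `ℓ²(X) → ℓ²(X, H)` pointing in the directions of
the coordinates of `ξ` and of `a ξ`; then the scalar operator `W* a V` maps the pointwise norm
`|ξ|` to `|a ξ|`, so it has norm `> t`. Compressing by contractive diagonal operators preserves
both the propagation bound and the bound on the blocks `P_x a P_x`, because diagonal operators
commute with the projections `P_x`. -/

open ContinuousLinearMap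

theorem upperBounds_subset_of_forall_exists_lt {α : Type*} [LinearOrder α] {s t : Set α}
    (h : ∀ y ∈ t, ∀ r < y, ∃ x ∈ s, r < x) : upperBounds s ⊆ upperBounds t := by
  intro M hM y hy
  by_contra! hMy
  obtain ⟨x, hx, hMx⟩ := h y hy M hMy
  exact (hM hx).not_gt hMx

theorem Real.sSup_eq_sSup_of_forall_exists_lt {s t : Set ℝ}
    (hst : ∀ x ∈ s, ∀ r < x, ∃ y ∈ t, r < y) (hts : ∀ y ∈ t, ∀ r < y, ∃ x ∈ s, r < x) :
    sSup s = sSup t := by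
  have hub : upperBounds s = upperBounds t :=
    (upperBounds_subset_of_forall_exists_lt hts).antisymm
      (upperBounds_subset_of_forall_exists_lt hst)
  rcases s.eq_empty_or_nonempty with rfl | hs
  · suffices t = ∅ by rw [this]
    exact Set.eq_empty_of_forall_notMem fun y hy => by
      obtain ⟨x, hx, -⟩ := hts y hy (y - 1) (by linarith)
      exact hx
  obtain ⟨x, hx⟩ := hs
  obtain ⟨y, hy, -⟩ := hst x hx (x - 1) (by linarith)
  by_cases hb : BddAbove s
  · have hbt : BddAbove t := by rwa [BddAbove, ← hub]
    exact (isLUB_csSup ⟨x, hx⟩ hb).unique ((isLUB_congr hub).2 (isLUB_csSup ⟨y, hy⟩ hbt))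
  · have hbt : ¬BddAbove t := by rwa [BddAbove, ← hub]
    rw [Real.sSup_of_not_bddAbove hb, Real.sSup_of_not_bddAbove hbt]

section Diagonal

variable {𝕜 Y E F : Type*} [NontriviallyNormedField 𝕜] [NormedAddCommGroup E]
  [NormedSpace 𝕜 E] [NormedAddCommGroup F] [NormedSpace 𝕜 F] {p : ℝ≥0∞} [Fact (1 ≤ p)]

theorem norm_apply_le_of_opNorm_le_one {T : E →L[𝕜] F} (hT : ‖T‖ ≤ 1) (v : E) :
    ‖T v‖ ≤ ‖v‖ := by
  simpa using T.le_of_opNorm_le hT v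

theorem opNorm_comp_comp_le_of_le_one {G : Type*} [NormedAddCommGroup G] [NormedSpace 𝕜 G]
    {f : E →L[𝕜] F} {g : F →L[𝕜] G} (a : F →L[𝕜] F) (hf : ‖f‖ ≤ 1) (hg : ‖g‖ ≤ 1) :
    ‖g ∘L a ∘L f‖ ≤ ‖a‖ :=
  calc ‖g ∘L a ∘L f‖ ≤ ‖g‖ * (‖a‖ * ‖f‖) :=
        (opNorm_comp_le _ _).trans (mul_le_mul_of_nonneg_left (opNorm_comp_le _ _) (norm_nonneg _))
    _ ≤ 1 * (‖a‖ * 1) := by gcongr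
    _ = ‖a‖ := by ring

def diagCLM (T : Y → E →L[𝕜] F) (hT : ∀ x, ‖T x‖ ≤ 1) :
    lp (fun _ : Y => E) p →L[𝕜] lp (fun _ : Y => F) p :=
  LinearMap.mkContinuous
    { toFun := fun f => ⟨fun x => T x (f x),
        (lp.memℓp f).mono' fun x => norm_apply_le_of_opNorm_le_one (hT x) _⟩
      map_add' := fun f g => lp.ext <| funext fun x => map_add (T x) (f x) (g x)
      map_smul' := fun c f => lp.ext <| funext fun x => map_smul (T x) c (f x) }
    1 fun f => by
      rw [one_mul]
      exact lp.norm_mono (zero_lt_one.trans_le Fact.out).ne' fun x =>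
        norm_apply_le_of_opNorm_le_one (hT x) _

variable (T : Y → E →L[𝕜] F) (hT : ∀ x, ‖T x‖ ≤ 1)

@[simp]
theorem diagCLM_apply (f : lp (fun _ : Y => E) p) (x : Y) : diagCLM T hT f x = T x (f x) :=
  rfl

theorem opNorm_diagCLM_le : ‖(diagCLM T hT : lp (fun _ : Y => E) p →L[𝕜] _)‖ ≤ 1 :=
  LinearMap.mkContinuous_norm_le _ zero_le_one _

theorem diagCLM_single (z : Y) (v : E) :
    diagCLM T hT (lp.single p z v) = lp.single p z (T z v) := by
  ext x
  by_cases hx : x = z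
  · subst hx; simp
  · simp [hx]

end Diagonal

section Hilbert

variable {Y E F : Type*} [NormedAddCommGroup E] [InnerProductSpace ℂ E]
  [NormedAddCommGroup F] [InnerProductSpace ℂ F]

theorem projSet_apply_s13 (s : Finset Y) (f : l2 Y E) (x : Y) :
    projSet s f x = if x ∈ s then f x else 0 := by
  have hterm (y : Y) : singleCLM y (evalCLM y f) = lp.single 2 y (f y) := rfl
  simp only [projSet, sum_apply, comp_apply, hterm]
  rw [lp.coeFn_sum, Finset.sum_apply]
  simp [Finset.sum_pi_single]

theorem opNorm_projSet_le (s : Finset Y) : ‖(projSet s : l2 Y E →L[ℂ] l2 Y E)‖ ≤ 1 :=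
  opNorm_le_bound _ zero_le_one fun f => by
    rw [one_mul]
    refine lp.norm_mono two_ne_zero fun x => ?_
    rw [projSet_apply_s13]
    split_ifs <;> simp

theorem diagCLM_comp_projSet (T : Y → E →L[ℂ] F) (hT : ∀ x, ‖T x‖ ≤ 1) (s : Finset Y) :
    diagCLM T hT ∘L projSet s = (projSet s ∘L diagCLM T hT : l2 Y E →L[ℂ] l2 Y F) := by
  ext f x
  simp only [comp_apply, diagCLM_apply, projSet_apply_s13]
  split_ifs <;> simp

def pointwiseNorm (f : l2 Y E) : l2 Y ℂ :=
  ⟨fun x => (‖f x‖ : ℂ), (lp.memℓp f).mono' fun x => by simp⟩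

@[simp]
theorem pointwiseNorm_apply (f : l2 Y E) (x : Y) : pointwiseNorm f x = (‖f x‖ : ℂ) :=
  rfl

@[simp]
theorem norm_pointwiseNorm (f : l2 Y E) : ‖pointwiseNorm f‖ = ‖f‖ :=
  le_antisymm (lp.norm_mono two_ne_zero fun x => by simp)
    (lp.norm_mono two_ne_zero fun x => by simp)

/-- `direction 0 = 0`, as `‖0‖⁻¹ = 0`. -/
def direction (v : E) : E := ((‖v‖ : ℂ))⁻¹ • v

theorem norm_direction_le_one (v : E) : ‖direction v‖ ≤ 1 := by
  rcases eq_or_ne v 0 with rfl | hv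
  · simp [direction]
  · rw [direction, norm_smul, norm_inv, Complex.norm_real, norm_norm,
      inv_mul_cancel₀ (norm_ne_zero_iff.2 hv)]

theorem norm_smul_direction (v : E) : (‖v‖ : ℂ) • direction v = v := by
  rcases eq_or_ne v 0 with rfl | hv
  · simp [direction]
  · rw [direction, smul_smul, mul_inv_cancel₀ (by exact_mod_cast norm_ne_zero_iff.2 hv),
      one_smul]

theorem inner_direction_self (v : E) : ⟪direction v, v⟫_ℂ = ‖v‖ := by
  rcases eq_or_ne v 0 with rfl | hv
  · simp [direction]
  · have : (‖v‖ : ℂ) ≠ 0 := by exact_mod_cast norm_ne_zero_iff.2 hv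
    rw [direction, inner_smul_left, inner_self_eq_norm_sq_to_K, map_inv₀, Complex.conj_ofReal]
    field_simp
    norm_cast

theorem diagCLM_toSpanSingleton_direction (f : l2 Y E)
    (hT : ∀ x, ‖toSpanSingleton ℂ (direction (f x))‖ ≤ 1) :
    diagCLM (fun x => toSpanSingleton ℂ (direction (f x))) hT (pointwiseNorm f) = f := by
  ext x
  exact norm_smul_direction (f x)

theorem diagCLM_innerSL_direction (f : l2 Y E)
    (hT : ∀ x, ‖innerSL ℂ (direction (f x))‖ ≤ 1) :
    diagCLM (fun x => innerSL ℂ (direction (f x))) hT f = pointwiseNorm f := by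
  ext x
  simp [inner_direction_self]

theorem diagCLM_innerSL_comp_toSpanSingleton {e : E} (he : ‖e‖ = 1)
    (hT : ∀ _ : Y, ‖innerSL ℂ e‖ ≤ 1) (hU : ∀ _ : Y, ‖toSpanSingleton ℂ e‖ ≤ 1) :
    diagCLM (fun _ => innerSL ℂ e) hT ∘L diagCLM (fun _ => toSpanSingleton ℂ e) hU =
      ContinuousLinearMap.id ℂ (l2 Y ℂ) := by
  ext f x
  simp [inner_self_eq_norm_sq_to_K, he]

end Hilbert

section Amplification

variable {X} {K : Type*} [NormedAddCommGroup K] [InnerProductSpace ℂ K]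
  {hfin : ∀ (x : X) (r : ℝ), (Metric.closedBall x r).Finite} {R S : ℝ}

theorem norm_compress_le_psiNorm (a : l2 X H →L[ℂ] l2 X H) (x : X) :
    ‖projSet (hfin x S).toFinset ∘L a ∘L projSet (hfin x S).toFinset‖ ≤ psiNorm X hfin S a := by
  refine le_ciSup (f := fun x => ‖projSet (hfin x S).toFinset ∘L a ∘L projSet (hfin x S).toFinset‖)
    ⟨‖a‖, ?_⟩ x
  rintro - ⟨y, rfl⟩
  exact opNorm_comp_comp_le_of_le_one a (opNorm_projSet_le _) (opNorm_projSet_le _)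

theorem psiNorm_nonneg (a : l2 X H →L[ℂ] l2 X H) : 0 ≤ psiNorm X hfin S a :=
  Real.iSup_nonneg fun _ => opNorm_nonneg _

theorem PropagationLE.diagCLM_comp_comp (T : X → K →L[ℂ] H) (hT : ∀ x, ‖T x‖ ≤ 1)
    (U : X → H →L[ℂ] K) (hU : ∀ x, ‖U x‖ ≤ 1) {a : l2 X H →L[ℂ] l2 X H} (ha : PropagationLE X R a) :
    PropagationLE X R (diagCLM U hU ∘L a ∘L diagCLM T hT) := by
  intro y z hyz v
  simp [diagCLM_single, ha y z hyz]

theorem psiNorm_diagCLM_comp_comp_le (T : X → K →L[ℂ] H) (hT : ∀ x, ‖T x‖ ≤ 1)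
    (U : X → H →L[ℂ] K) (hU : ∀ x, ‖U x‖ ≤ 1) (a : l2 X H →L[ℂ] l2 X H) :
    psiNorm X hfin S (diagCLM U hU ∘L a ∘L diagCLM T hT) ≤ psiNorm X hfin S a := by
  refine Real.iSup_le (fun x => ?_) (psiNorm_nonneg a)
  set P : l2 X H →L[ℂ] l2 X H := projSet (hfin x S).toFinset
  set Q : l2 X K →L[ℂ] l2 X K := projSet (hfin x S).toFinset
  have hcomm : Q ∘L (diagCLM U hU ∘L a ∘L diagCLM T hT) ∘L Q =
      diagCLM U hU ∘L (P ∘L a ∘L P) ∘L diagCLM T hT :=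
    calc _ = (Q ∘L diagCLM U hU) ∘L a ∘L (diagCLM T hT ∘L Q) := by simp only [comp_assoc]
      _ = (diagCLM U hU ∘L P) ∘L a ∘L (P ∘L diagCLM T hT) := by
        rw [diagCLM_comp_projSet, diagCLM_comp_projSet]
      _ = _ := by simp only [comp_assoc]
  rw [hcomm]
  exact (opNorm_comp_comp_le_of_le_one _ (opNorm_diagCLM_le T hT) (opNorm_diagCLM_le U hU)).trans
    (norm_compress_le_psiNorm a x)

theorem invNorm_eq_invNorm_of_forall_exists_lt
    (hHK : ∀ a : l2 X H →L[ℂ] l2 X H, PropagationLE X R a → psiNorm X hfin S a ≤ 1 →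
      ∀ r < ‖a‖, ∃ b : l2 X K →L[ℂ] l2 X K,
        PropagationLE X R b ∧ psiNorm X hfin S b ≤ 1 ∧ r < ‖b‖)
    (hKH : ∀ b : l2 X K →L[ℂ] l2 X K, PropagationLE X R b → psiNorm X hfin S b ≤ 1 →
      ∀ r < ‖b‖, ∃ a : l2 X H →L[ℂ] l2 X H,
        PropagationLE X R a ∧ psiNorm X hfin S a ≤ 1 ∧ r < ‖a‖) :
    invNorm X H hfin R S = invNorm X K hfin R S := by
  refine Real.sSup_eq_sSup_of_forall_exists_lt ?_ ?_
  · rintro - ⟨a, ha, hψ, rfl⟩ r hr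
    obtain ⟨b, hb, hbψ, hrb⟩ := hHK a ha hψ r hr
    exact ⟨‖b‖, ⟨b, hb, hbψ, rfl⟩, hrb⟩
  · rintro - ⟨b, hb, hbψ, rfl⟩ r hr
    obtain ⟨a, ha, hψ, hra⟩ := hKH b hb hbψ r hr
    exact ⟨‖a‖, ⟨a, ha, hψ, rfl⟩, hra⟩

theorem exists_lt_norm_amplification {e : H} (he : ‖e‖ = 1)
    {a : l2 X ℂ →L[ℂ] l2 X ℂ} (ha : PropagationLE X R a) (hψ : psiNorm X hfin S a ≤ 1)
    {r : ℝ} (hr : r < ‖a‖) :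
    ∃ b : l2 X H →L[ℂ] l2 X H, PropagationLE X R b ∧ psiNorm X hfin S b ≤ 1 ∧ r < ‖b‖ := by
  have hin : ∀ _ : X, ‖innerSL ℂ e‖ ≤ 1 := fun _ => (innerSL_apply_norm ℂ e).trans_le he.le
  have hout : ∀ _ : X, ‖toSpanSingleton ℂ e‖ ≤ 1 := fun _ =>
    (norm_toSpanSingleton e).trans_le he.le
  set V : l2 X ℂ →L[ℂ] l2 X H := diagCLM (fun _ : X => toSpanSingleton ℂ e) hout
  set W : l2 X H →L[ℂ] l2 X ℂ := diagCLM (fun _ : X => innerSL ℂ e) hin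
  have hWV : W ∘L V = ContinuousLinearMap.id ℂ (l2 X ℂ) :=
    diagCLM_innerSL_comp_toSpanSingleton he hin hout
  refine ⟨V ∘L a ∘L W, ha.diagCLM_comp_comp _ hin _ hout,
    (psiNorm_diagCLM_comp_comp_le _ hin _ hout a).trans hψ, hr.trans_le ?_⟩
  calc ‖a‖ = ‖W ∘L (V ∘L a ∘L W) ∘L V‖ := by
        rw [← comp_assoc, ← comp_assoc, hWV, id_comp, comp_assoc, hWV, comp_id]
    _ ≤ ‖V ∘L a ∘L W‖ :=
        opNorm_comp_comp_le_of_le_one _ (opNorm_diagCLM_le _ hout) (opNorm_diagCLM_le _ hin)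

theorem exists_lt_norm_scalar_compression {a : l2 X H →L[ℂ] l2 X H} (ha : PropagationLE X R a)
    (hψ : psiNorm X hfin S a ≤ 1) {r : ℝ} (hr : r < ‖a‖) :
    ∃ b : l2 X ℂ →L[ℂ] l2 X ℂ, PropagationLE X R b ∧ psiNorm X hfin S b ≤ 1 ∧ r < ‖b‖ := by
  obtain ⟨ξ, hξ, hr⟩ := a.exists_lt_apply_of_lt_opNorm hr
  have hV : ∀ x, ‖toSpanSingleton ℂ (direction (ξ x))‖ ≤ 1 := fun x =>
    (norm_toSpanSingleton _).trans_le (norm_direction_le_one _)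
  have hW : ∀ y, ‖innerSL ℂ (direction (a ξ y))‖ ≤ 1 := fun y =>
    (innerSL_apply_norm ℂ _).trans_le (norm_direction_le_one _)
  set V : l2 X ℂ →L[ℂ] l2 X H := diagCLM (fun x => toSpanSingleton ℂ (direction (ξ x))) hV
  set W : l2 X H →L[ℂ] l2 X ℂ := diagCLM (fun y => innerSL ℂ (direction (a ξ y))) hW
  have hb : (W ∘L a ∘L V) (pointwiseNorm ξ) = pointwiseNorm (a ξ) := by
    simp only [comp_apply, V, W, diagCLM_toSpanSingleton_direction, diagCLM_innerSL_direction]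
  refine ⟨W ∘L a ∘L V, ha.diagCLM_comp_comp _ hV _ hW,
    (psiNorm_diagCLM_comp_comp_le _ hV _ hW a).trans hψ, ?_⟩
  calc r < ‖a ξ‖ := hr
    _ = ‖(W ∘L a ∘L V) (pointwiseNorm ξ)‖ := by rw [hb, norm_pointwiseNorm]
    _ ≤ ‖W ∘L a ∘L V‖ := unit_le_opNorm _ _ (by rw [norm_pointwiseNorm]; exact hξ.le)

theorem invNorm_eq_invNorm_complex {e : H} (he : ‖e‖ = 1) :
    invNorm X H hfin R S = invNorm X ℂ hfin R S :=
  invNorm_eq_invNorm_of_forall_exists_lt (fun _ ha hψ _ hr => exists_lt_norm_scalar_compression ha hψ hr)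
    (fun _ ha hψ _ hr => exists_lt_norm_amplification he ha hψ hr)

end Amplification

theorem stmt13
    (hfin : ∀ (x : X) (r : ℝ), (Metric.closedBall x r).Finite)
    (R S : ℝ) :
    (⨆ n : ℕ, invNorm X (EuclideanSpace ℂ (Fin (n + 1))) hfin R S) =
      invNorm X ℂ hfin R S := by
  have h (n : ℕ) : invNorm X (EuclideanSpace ℂ (Fin (n + 1))) hfin R S = invNorm X ℂ hfin R S :=
    invNorm_eq_invNorm_complex (e := EuclideanSpace.single 0 1) (by simp)
  simp_rw [h]
  exact ciSup_const
end
end
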